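/- If ψ is a state invariant of an LPE P and ψ holds in the initial state ι, then P(ι) is strongly bisimilar to the restricted LPE P^{ψ,J}(ι) obtained by strengthening the guards of the summands in any subset J of summand indices with ψ. -/

import Mathlib

/-! The diagonal relation on the states satisfying ψ is a bisimulation: at such a state the
strengthened guards coincide with the original ones, so both LPEs have the same outgoing
transitions, and every transition stays inside ψ because ψ is invariant. -/

/-- A bisimulation between two LTSs with transition relations `tr1` and `tr2`. -/
def IsBisimulationBetween {S T Act : Type*}
    (tr1 : S → Act → S → Prop) (tr2 : T → Act → T → Prop) (R : S → T → Prop) : Prop :=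
  ∀ s t, R s t →
    (∀ a s', tr1 s a s' → ∃ t', tr2 t a t' ∧ R s' t') ∧
    (∀ a t', tr2 t a t' → ∃ s', tr1 s a s' ∧ R s' t')

def BisimilarBetween {S T Act : Type*}
    (tr1 : S → Act → S → Prop) (tr2 : T → Act → T → Prop) (s : S) (t : T) : Prop :=
  ∃ R, IsBisimulationBetween tr1 tr2 R ∧ R s t

/-- The LTS induced by an LPE with guards `c`, actions `α` and updates `g`. -/
def LpeTr {D Act : Type*} {I : Type*} {E : I → Type*}
    (c : ∀ i, D → E i → Bool) (α : ∀ i, D → E i → Act) (g : ∀ i, D → E i → D)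
    (d : D) (a : Act) (d' : D) : Prop :=
  ∃ i e, c i d e = true ∧ a = α i d e ∧ d' = g i d e

theorem isBisimulationBetween_diag_of_invariant {S Act : Type*} (tr1 tr2 : S → Act → S → Prop)
    (p : S → Prop) (hagree : ∀ s a s', p s → (tr1 s a s' ↔ tr2 s a s'))
    (hinv : ∀ s a s', p s → tr1 s a s' → p s') :
    IsBisimulationBetween tr1 tr2 (fun s t => s = t ∧ p s) := by
  rintro s _ ⟨rfl, hs⟩
  refine ⟨fun a s' h => ⟨s', (hagree s a s' hs).1 h, rfl, hinv s a s' hs h⟩,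
    fun a s' h => ⟨s', (hagree s a s' hs).2 h, rfl, hinv s a s' hs ((hagree s a s' hs).2 h)⟩⟩

theorem lpeTr_congr_guard {D Act I : Type*} {E : I → Type*} {c c' : ∀ i, D → E i → Bool}
    (α : ∀ i, D → E i → Act) (g : ∀ i, D → E i → D) {d : D} (h : ∀ i e, c i d e = c' i d e)
    (a : Act) (d' : D) : LpeTr c α g d a d' ↔ LpeTr c' α g d a d' := by
  simp only [LpeTr, h]

theorem lpeTr_invariant {D Act I : Type*} {E : I → Type*} {c : ∀ i, D → E i → Bool}
    {α : ∀ i, D → E i → Act} {g : ∀ i, D → E i → D} {ψ : D → Bool}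
    (hinv : ∀ i (d : D) (e : E i), ψ d = true → c i d e = true → ψ (g i d e) = true)
    {d d' : D} {a : Act} (hd : ψ d = true) : LpeTr c α g d a d' → ψ d' = true := by
  rintro ⟨i, e, hc, -, rfl⟩
  exact hinv i d e hd hc

theorem restrictedGuard_eq {D I : Type*} {E : I → Type*}
    (c : ∀ i, D → E i → Bool) (ψ : D → Bool) (J : Set I) [DecidablePred (· ∈ J)] {d : D}
    (hd : ψ d = true) (i : I) (e : E i) : (if i ∈ J then c i d e && ψ d else c i d e) = c i d e := by
  split_ifs <;> simp [hd]

theorem restricted_lpe_bisimilar {D Act : Type*} {I : Type*} {E : I → Type*}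
    (c : ∀ i, D → E i → Bool) (α : ∀ i, D → E i → Act) (g : ∀ i, D → E i → D)
    (ψ : D → Bool)
    (hinv : ∀ i (d : D) (e : E i), ψ d = true → c i d e = true → ψ (g i d e) = true)
    (J : Set I) [DecidablePred (· ∈ J)]
    (ι : D) (hι : ψ ι = true) :
    BisimilarBetween (LpeTr c α g)
      (LpeTr (fun i d e => if i ∈ J then c i d e && ψ d else c i d e) α g) ι ι :=
  ⟨_, isBisimulationBetween_diag_of_invariant _ _ (fun d => ψ d = true)
    (fun _ _ _ hd => (lpeTr_congr_guard α g (restrictedGuard_eq c ψ J hd) _ _).symm)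
    (fun _ _ _ hd => lpeTr_invariant hinv hd), rfl, hι⟩
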